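/- Under the conditions 0 < λ_FNM ≤ λ_FM1 and λ_FM2 ≥ (3λ_FNM + λ_FM1)/2, the estimator that sets Ẑ_i = j when P(Z_i = j | γ) > λ_FM1/(λ_FM1 + λ_FNM) + P(Z_i ∉ {0,j} | γ)·(λ_FM2 - λ_FM1 - λ_FNM)/(λ_FM1 + λ_FNM) and Ẑ_i = 0 otherwise, minimizes the posterior expected loss E(L(Z, Ẑ) | γ) = Σ_i E(L(Z_i, Ẑ_i) | γ) over bipartite matchings Ẑ, where L(Z_i, Ẑ_i) equals 0 if Z_i = Ẑ_i, λ_FNM if Z_i > 0 and Ẑ_i = 0, λ_FM1 if Z_i = 0 and Ẑ_i > 0, and λ_FM2 if Z_i, Ẑ_i > 0 with Z_i ≠ Ẑ_i. -/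
import Mathlib


open Finset

/-- A matching labeling satisfies the bipartite restriction if two records of A
matched to the same positive label coincide. -/
def bipartite {nA nB : ℕ} (Z : Fin nA → Fin (nB + 1)) : Prop :=
  ∀ i i', Z i = Z i' → Z i ≠ 0 → i = i'

/-- Loss for a single record: 0 if correct, `lFNM` for a false non-match,
`lFM1` for a match where the truth is a non-match, `lFM2` for a wrong match. -/
noncomputable def lossOne (lFNM lFM1 lFM2 : ℝ) {nB : ℕ} (z zhat : Fin (nB + 1)) : ℝ :=
  if z = zhat then 0 else if zhat = 0 then lFNM else if z = 0 then lFM1 else lFM2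

theorem stmt5 {nA nB : ℕ} (lFNM lFM1 lFM2 : ℝ)
    (h1 : 0 < lFNM) (h2 : lFNM ≤ lFM1) (h3 : lFM2 ≥ (3 * lFNM + lFM1) / 2)
    (w : (Fin nA → Fin (nB + 1)) → ℝ)
    (hw0 : ∀ Z, 0 ≤ w Z) (hw1 : ∑ Z, w Z = 1)
    (hsupp : ∀ Z, w Z ≠ 0 → bipartite Z)
    (P R : Fin nA → Fin (nB + 1) → ℝ)
    (hP : ∀ i j, P i j = ∑ Z, if Z i = j then w Z else 0)
    (hR : ∀ i j, R i j = ∑ Z, if Z i ≠ 0 ∧ Z i ≠ j then w Z else 0)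
    (Zhat : Fin nA → Fin (nB + 1))
    (hrule1 : ∀ i, Zhat i ≠ 0 →
      P i (Zhat i) >
        lFM1 / (lFM1 + lFNM) + R i (Zhat i) * (lFM2 - lFM1 - lFNM) / (lFM1 + lFNM))
    (hrule2 : ∀ i, Zhat i = 0 → ∀ j : Fin (nB + 1), j ≠ 0 →
      ¬ P i j > lFM1 / (lFM1 + lFNM) + R i j * (lFM2 - lFM1 - lFNM) / (lFM1 + lFNM)) :
    bipartite Zhat ∧
    ∀ W : Fin nA → Fin (nB + 1), bipartite W →
      ∑ Z, w Z * ∑ i, lossOne lFNM lFM1 lFM2 (Z i) (Zhat i) ≤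
        ∑ Z, w Z * ∑ i, lossOne lFNM lFM1 lFM2 (Z i) (W i) := by
  have hs : 0 < lFM1 + lFNM := by linarith
  have hl2 : 0 < lFM2 := by linarith
  have hPnn : ∀ i j, 0 ≤ P i j := by
    intro i j; rw [hP]
    exact Finset.sum_nonneg fun Z _ => by split <;> [exact hw0 Z; exact le_refl 0]
  have hRnn : ∀ i j, 0 ≤ R i j := by
    intro i j; rw [hR]
    exact Finset.sum_nonneg fun Z _ => by split <;> [exact hw0 Z; exact le_refl 0]
  have hsum1 : ∀ (i : Fin nA) (j : Fin (nB + 1)), j ≠ 0 →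
      P i 0 + P i j + R i j = 1 := by
    intro i j hj
    rw [hP, hP, hR, ← Finset.sum_add_distrib, ← Finset.sum_add_distrib, ← hw1]
    apply Finset.sum_congr rfl
    intro Z _
    by_cases h0 : Z i = 0
    · simp [h0, Ne.symm hj]
    · by_cases hzj : Z i = j <;> simp [h0, hzj, hj]
  -- rule inequalities in cleared-denominator form
  have hthresh : ∀ (i : Fin nA) (j : Fin (nB + 1)),
      lFM1 / (lFM1 + lFNM) + R i j * (lFM2 - lFM1 - lFNM) / (lFM1 + lFNM)
        = (lFM1 + R i j * (lFM2 - lFM1 - lFNM)) / (lFM1 + lFNM) := by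
    intro i j; field_simp
  have hrule1' : ∀ i, Zhat i ≠ 0 →
      lFM1 + R i (Zhat i) * (lFM2 - lFM1 - lFNM) < P i (Zhat i) * (lFM1 + lFNM) := by
    intro i hi
    have h := hrule1 i hi
    rw [hthresh] at h
    exact (div_lt_iff₀ hs).mp h
  have hrule2' : ∀ i, Zhat i = 0 → ∀ j : Fin (nB + 1), j ≠ 0 →
      P i j * (lFM1 + lFNM) ≤ lFM1 + R i j * (lFM2 - lFM1 - lFNM) := by
    intro i hi j hj
    have h := hrule2 i hi j hj
    rw [hthresh] at h
    push_neg at h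
    exact (le_div_iff₀ hs).mp h
  -- the chosen label has posterior mass > 1/2
  have hhalf : ∀ i, Zhat i ≠ 0 → 1 / 2 < P i (Zhat i) := by
    intro i hi
    have h := hrule1' i hi
    have hid := hsum1 i (Zhat i) hi
    have hP0 := hPnn i 0
    have hRn := hRnn i (Zhat i)
    rcases le_or_gt 0 (lFM2 - lFM1 - lFNM) with hc | hc
    · nlinarith [mul_nonneg hRn hc]
    · nlinarith [mul_nonneg hP0 (neg_nonneg.mpr hc.le),
        mul_nonneg (hPnn i (Zhat i)) (neg_nonneg.mpr hc.le)]
  -- two records cannot both be matched to the same j with high probability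
  have hdisj1 : ∀ (i i' : Fin nA) (j : Fin (nB + 1)), i ≠ i' → j ≠ 0 →
      P i j + P i' j ≤ 1 := by
    intro i i' j hii hj
    rw [hP, hP, ← hw1, ← Finset.sum_add_distrib]
    apply Finset.sum_le_sum
    intro Z _
    by_cases hij : Z i = j
    · by_cases hij' : Z i' = j
      · have hwz : w Z = 0 := by
          by_contra hwz
          exact hii (hsupp Z hwz i i' (hij.trans hij'.symm) (hij ▸ hj))
        simp [hij, hij', hwz]
      · simp [hij, hij', hw0 Z]
    · by_cases hij' : Z i' = j <;> simp [hij, hij', hw0 Z]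
  have hdisj2 : ∀ (i : Fin nA) (j j' : Fin (nB + 1)), j ≠ j' →
      P i j + P i j' ≤ 1 := by
    intro i j j' hjj
    rw [hP, hP, ← hw1, ← Finset.sum_add_distrib]
    apply Finset.sum_le_sum
    intro Z _
    by_cases hij : Z i = j
    · have : Z i ≠ j' := fun h => hjj (hij ▸ h)
      simp [hij, this, hjj, Ne.symm hjj, hw0 Z]
    · by_cases hij' : Z i = j' <;> simp [hij, hij', hjj, Ne.symm hjj, hw0 Z]
  -- per-record expected loss
  set F : Fin nA → Fin (nB + 1) → ℝ :=
    fun i v => ∑ Z, w Z * lossOne lFNM lFM1 lFM2 (Z i) v with hF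
  have hF0 : ∀ i, F i 0 = lFNM * (1 - P i 0) := by
    intro i
    have key : ∀ Z : Fin nA → Fin (nB + 1),
        w Z * lossOne lFNM lFM1 lFM2 (Z i) 0
          = lFNM * w Z - lFNM * (if Z i = 0 then w Z else 0) := by
      intro Z
      by_cases h : Z i = 0 <;> simp [lossOne, h] <;> ring
    show (∑ Z : Fin nA → Fin (nB + 1), w Z * lossOne lFNM lFM1 lFM2 (Z i) 0)
      = lFNM * (1 - P i 0)
    rw [Finset.sum_congr rfl (fun Z _ => key Z), Finset.sum_sub_distrib,
      ← Finset.mul_sum, ← Finset.mul_sum, hw1, hP]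
    ring
  have hFj : ∀ (i : Fin nA) (j : Fin (nB + 1)), j ≠ 0 →
      F i j = lFM1 * P i 0 + lFM2 * R i j := by
    intro i j hj
    have key : ∀ Z : Fin nA → Fin (nB + 1),
        w Z * lossOne lFNM lFM1 lFM2 (Z i) j
          = lFM1 * (if Z i = 0 then w Z else 0)
            + lFM2 * (if Z i ≠ 0 ∧ Z i ≠ j then w Z else 0) := by
      intro Z
      by_cases hzj : Z i = j
      · have : Z i ≠ 0 := hzj ▸ hj
        simp [lossOne, hzj, this, hj]
      · by_cases h0 : Z i = 0
        · simp [lossOne, hzj, h0, hj, Ne.symm hj]; ring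
        · simp [lossOne, hzj, h0, hj]; ring
    show (∑ Z : Fin nA → Fin (nB + 1), w Z * lossOne lFNM lFM1 lFM2 (Z i) j)
      = lFM1 * P i 0 + lFM2 * R i j
    rw [Finset.sum_congr rfl (fun Z _ => key Z), Finset.sum_add_distrib,
      ← Finset.mul_sum, ← Finset.mul_sum, hP, hR]
  -- pointwise optimality
  have hmin : ∀ (i : Fin nA) (v : Fin (nB + 1)), F i (Zhat i) ≤ F i v := by
    intro i v
    by_cases hz : Zhat i = 0
    · rw [hz]
      by_cases hv : v = 0
      · rw [hv]
      · rw [hF0, hFj i v hv]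
        have h := hrule2' i hz v hv
        have hid := hsum1 i v hv
        have hrw : P i 0 = 1 - P i v - R i v := by linarith
        rw [hrw]
        nlinarith [h]
    · by_cases hv : v = Zhat i
      · rw [hv]
      · by_cases hv0 : v = 0
        · rw [hv0, hF0, hFj i (Zhat i) hz]
          have h := hrule1' i hz
          have hid := hsum1 i (Zhat i) hz
          have hrw : P i 0 = 1 - P i (Zhat i) - R i (Zhat i) := by linarith
          rw [hrw]
          nlinarith [h]
        · rw [hFj i (Zhat i) hz, hFj i v hv0]
          have hPj := hhalf i hz
          have hd := hdisj2 i (Zhat i) v (fun h => hv h.symm)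
          have hRle : R i (Zhat i) ≤ R i v := by
            have h1' := hsum1 i (Zhat i) hz
            have h2' := hsum1 i v hv0
            linarith
          have := mul_le_mul_of_nonneg_left hRle hl2.le
          linarith
  constructor
  · intro i i' heq hne
    by_contra hii
    have ha := hhalf i hne
    have hne' : Zhat i' ≠ 0 := heq ▸ hne
    have hb := hhalf i' hne'
    have hd := hdisj1 i i' (Zhat i) hii hne
    rw [← heq] at hb
    linarith
  · intro W _
    have swap : ∀ V : Fin nA → Fin (nB + 1),
        ∑ Z, w Z * ∑ i, lossOne lFNM lFM1 lFM2 (Z i) (V i) = ∑ i, F i (V i) := by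
      intro V
      simp_rw [Finset.mul_sum]
      rw [Finset.sum_comm]
    rw [swap Zhat, swap W]
    exact Finset.sum_le_sum fun i _ => hmin i (W i)
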